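/- arXiv:1401.4189 — 5 statements merged into one kernel-verified Lean document; each statement's English description precedes it below -/
import Mathlib

section
/- Let U, X1, X2, V2, Y be random variables on finite alphabets such that p(u,v2|x1,x2)=p(u|x1)p(v2|x2) and Y=f(U,V2) for a deterministic function f. Then I(X1,X2;Y|U) ≤ I(X2;V2). -/
open scoped BigOperators

/-- Shannon entropy of a finitely-supported distribution (convention 0·log 0 = 0 via `Real.log 0 = 0`). -/
noncomputable def ent {Ω : Type*} [Fintype Ω] (p : Ω → ℝ) : ℝ :=
  -∑ ω, p ω * Real.log (p ω)

/-- Marginal (pushforward) of a joint distribution `p` along a map `f`. -/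
noncomputable def marg {Ω S : Type*} [Fintype Ω] [Fintype S] [DecidableEq S]
    (p : Ω → ℝ) (f : Ω → S) : S → ℝ :=
  fun s => ∑ ω, if f ω = s then p ω else 0

/-- Mutual information I(fA; fB) under the joint distribution `p`. -/
noncomputable def MI {Ω A B : Type*} [Fintype Ω] [Fintype A] [Fintype B]
    [DecidableEq A] [DecidableEq B] (p : Ω → ℝ) (fA : Ω → A) (fB : Ω → B) : ℝ :=
  ent (marg p fA) + ent (marg p fB) - ent (marg p (fun ω => (fA ω, fB ω)))

/-- Conditional mutual information I(fA; fB | fC) under the joint distribution `p`. -/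
noncomputable def CMI {Ω A B C : Type*} [Fintype Ω] [Fintype A] [Fintype B] [Fintype C]
    [DecidableEq A] [DecidableEq B] [DecidableEq C]
    (p : Ω → ℝ) (fA : Ω → A) (fB : Ω → B) (fC : Ω → C) : ℝ :=
  ent (marg p (fun ω => (fA ω, fC ω))) + ent (marg p (fun ω => (fB ω, fC ω)))
    - ent (marg p fC) - ent (marg p (fun ω => (fA ω, fB ω, fC ω)))

/-!
Since `Y` is a function of `(U, V₂)`, conditioning on `U` and data processing give
`I(X₁X₂; Y | U) ≤ I(X₁X₂; V₂ | U)`, and the chain rule bounds this by `I(X₁X₂U; V₂)`.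
Given `(X₁, X₂, U)` the output `V₂` has law `p(v₂ | x₂)`, the same as given `X₂` alone, so
`I(X₁X₂U; V₂) = H(V₂) - H(V₂ | X₂) = I(X₂; V₂)`. The only inequality used, `I(A; B | C) ≥ 0`,
is Gibbs' inequality, i.e. `log t ≤ t - 1`.
-/

open Finset Function Real

section Marginal

variable {Ω A S T : Type*} [Fintype Ω] [Fintype A] [Fintype S] [Fintype T]
  [DecidableEq A] [DecidableEq S] [DecidableEq T] {p : Ω → ℝ}

lemma marg_nonneg (hp : ∀ ω, 0 ≤ p ω) (g : Ω → S) (s : S) : 0 ≤ marg p g s :=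
  sum_nonneg fun ω _ => by split_ifs <;> simp [hp ω]

lemma sum_marg_mul (p : Ω → ℝ) (g : Ω → S) (F : S → ℝ) :
    ∑ s, marg p g s * F s = ∑ ω, p ω * F (g ω) := by
  simp only [marg, sum_mul, ite_mul, zero_mul]
  rw [sum_comm]
  simp

lemma sum_marg (p : Ω → ℝ) (g : Ω → S) : ∑ s, marg p g s = ∑ ω, p ω := by
  simpa using sum_marg_mul p g 1

lemma sum_marg_pair_fst (p : Ω → ℝ) (a : Ω → A) (c : Ω → S) (s : S) :
    ∑ α, marg p (fun ω => (a ω, c ω)) (α, s) = marg p c s := by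
  simp only [marg]
  rw [sum_comm]
  simp [ite_and]

lemma marg_apply_pos (hp : ∀ ω, 0 ≤ p ω) (g : Ω → S) {ω : Ω} (hω : p ω ≠ 0) :
    0 < marg p g (g ω) := by
  have hle : p ω ≤ marg p g (g ω) := by
    simpa [marg] using single_le_sum (fun ω' _ => by split_ifs <;> simp [hp ω'])
      (mem_univ ω) (f := fun ω' => if g ω' = g ω then p ω' else 0)
  exact (lt_of_le_of_ne (hp ω) hω.symm).trans_le hle

lemma ent_marg_eq (p : Ω → ℝ) (g : Ω → S) :
    ent (marg p g) = -∑ ω, p ω * log (marg p g (g ω)) := by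
  rw [ent, sum_marg_mul p g fun s => log (marg p g s)]

lemma marg_eq_marg_marg {g : Ω → S} {g' : Ω → T} (e : S → T)
    (h : ∀ ω, p ω ≠ 0 → g' ω = e (g ω)) : marg p g' = marg (marg p g) e := by
  funext t
  have hmul : ∀ (μ : S → ℝ), marg μ e t = ∑ s, μ s * if e s = t then 1 else 0 := fun μ => by
    simp [marg]
  rw [hmul, sum_marg_mul]
  refine sum_congr rfl fun ω _ => ?_
  by_cases hω : p ω = 0
  · simp [hω]
  · simp [h ω hω]

lemma ent_marg_of_injective (μ : S → ℝ) {e : S → T} (he : Injective e) :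
    ent (marg μ e) = ent μ := by
  have hmarg : ∀ s, marg μ e (e s) = μ s := fun s => by simp [marg, he.eq_iff]
  rw [ent, ent, neg_inj]
  refine (Fintype.sum_of_injective e he _ _ (fun t ht => ?_) fun s => by rw [hmarg]).symm
  have : ∀ s, e s ≠ t := fun s hs => ht ⟨s, hs⟩
  simp [marg, this]

lemma ent_marg_eq_of_injective {g : Ω → S} {g' : Ω → T} {e : S → T} (he : Injective e)
    (h : ∀ ω, p ω ≠ 0 → g' ω = e (g ω)) : ent (marg p g') = ent (marg p g) := by
  rw [marg_eq_marg_marg e h, ent_marg_of_injective _ he]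

end Marginal

section Gibbs

variable {Ω : Type*} [Fintype Ω] {p : Ω → ℝ}

lemma sum_mul_log_le_of_sum_mul_div_le (hp : ∀ ω, 0 ≤ p ω) {P Q : Ω → ℝ}
    (hP : ∀ ω, p ω ≠ 0 → 0 < P ω) (hQ : ∀ ω, p ω ≠ 0 → 0 < Q ω)
    (hsum : ∑ ω, p ω * (Q ω / P ω) ≤ ∑ ω, p ω) :
    ∑ ω, p ω * log (Q ω) ≤ ∑ ω, p ω * log (P ω) := by
  have hterm : ∀ ω, p ω * log (Q ω) - p ω * log (P ω) ≤ p ω * (Q ω / P ω) - p ω := by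
    intro ω
    by_cases hω : p ω = 0
    · simp [hω]
    · have hlog := log_le_sub_one_of_pos (div_pos (hQ ω hω) (hP ω hω))
      rw [log_div (hQ ω hω).ne' (hP ω hω).ne'] at hlog
      linarith [mul_le_mul_of_nonneg_left hlog (hp ω)]
  have hsum_le := sum_le_sum fun ω (_ : ω ∈ univ) => hterm ω
  simp only [sum_sub_distrib] at hsum_le
  linarith

lemma sum_mul_log_mul {F G : Ω → ℝ} (hF : ∀ ω, p ω ≠ 0 → 0 < F ω)
    (hG : ∀ ω, p ω ≠ 0 → 0 < G ω) :
    ∑ ω, p ω * log (F ω * G ω) = ∑ ω, p ω * log (F ω) + ∑ ω, p ω * log (G ω) := by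
  rw [← sum_add_distrib]
  refine sum_congr rfl fun ω _ => ?_
  by_cases hω : p ω = 0
  · simp [hω]
  · rw [log_mul (hF ω hω).ne' (hG ω hω).ne', mul_add]

end Gibbs

section Inequalities

variable {Ω A B C S T : Type*} [Fintype Ω] [Fintype A] [Fintype B] [Fintype C] [Fintype S]
  [Fintype T] [DecidableEq A] [DecidableEq B] [DecidableEq C] [DecidableEq S] [DecidableEq T]
  {p : Ω → ℝ}

theorem CMI_nonneg (hp : ∀ ω, 0 ≤ p ω) (a : Ω → A) (b : Ω → B) (c : Ω → C) :
    0 ≤ CMI p a b c := by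
  rw [CMI, ent_marg_eq p (fun ω => (a ω, c ω)), ent_marg_eq p (fun ω => (b ω, c ω)),
    ent_marg_eq p c, ent_marg_eq p (fun ω => (a ω, b ω, c ω))]
  set mac := marg p fun ω => (a ω, c ω)
  set mbc := marg p fun ω => (b ω, c ω)
  set mc := marg p c
  set mabc := marg p fun ω => (a ω, b ω, c ω)
  -- Gibbs' inequality against the conditionally independent coupling `mac * mbc / mc`.
  have hgibbs : ∑ ω, p ω * log (mac (a ω, c ω) * mbc (b ω, c ω))
      ≤ ∑ ω, p ω * log (mabc (a ω, b ω, c ω) * mc (c ω)) := by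
    refine sum_mul_log_le_of_sum_mul_div_le hp
      (fun ω hω => mul_pos (marg_apply_pos hp _ hω) (marg_apply_pos hp _ hω))
      (fun ω hω => mul_pos (marg_apply_pos hp _ hω) (marg_apply_pos hp _ hω)) ?_
    calc ∑ ω, p ω * (mac (a ω, c ω) * mbc (b ω, c ω) / (mabc (a ω, b ω, c ω) * mc (c ω)))
        = ∑ t : A × B × C, mabc t * (mac (t.1, t.2.2) * mbc t.2 / (mabc t * mc t.2.2)) :=
          (sum_marg_mul p (fun ω => (a ω, b ω, c ω))
            fun t => mac (t.1, t.2.2) * mbc t.2 / (mabc t * mc t.2.2)).symm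
      _ ≤ ∑ t : A × B × C, mac (t.1, t.2.2) * mbc t.2 / mc t.2.2 := by
          refine sum_le_sum fun t _ => ?_
          rw [← mul_div_assoc]
          exact mul_div_mul_left_le (div_nonneg (mul_nonneg (marg_nonneg hp _ _)
            (marg_nonneg hp _ _)) (marg_nonneg hp _ _))
      _ = ∑ t : B × C, mc t.2 * mbc t / mc t.2 := by
          rw [Fintype.sum_prod_type, sum_comm]
          simp_rw [← sum_div, ← sum_mul, mac, sum_marg_pair_fst]
          rfl
      _ ≤ ∑ t : B × C, mbc t := by
          refine sum_le_sum fun t _ => ?_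
          obtain hz | hz := eq_or_ne (mc t.2) 0
          · simp [hz, mbc, marg_nonneg hp]
          · rw [mul_div_cancel_left₀ _ hz]
      _ = ∑ ω, p ω := sum_marg p _
  rw [sum_mul_log_mul (F := fun ω => mac (a ω, c ω)) (G := fun ω => mbc (b ω, c ω))
      (fun _ hω => marg_apply_pos hp _ hω) (fun _ hω => marg_apply_pos hp _ hω),
    sum_mul_log_mul (F := fun ω => mabc (a ω, b ω, c ω)) (G := fun ω => mc (c ω))
      (fun _ hω => marg_apply_pos hp _ hω) (fun _ hω => marg_apply_pos hp _ hω)] at hgibbs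
  linarith

lemma ent_marg_const (h1 : ∑ ω, p ω = 1) : ent (marg p fun _ => ()) = 0 := by
  simp [ent, marg, h1]

theorem MI_nonneg (hp : ∀ ω, 0 ≤ p ω) (h1 : ∑ ω, p ω = 1) (a : Ω → A) (b : Ω → B) :
    0 ≤ MI p a b := by
  have h := CMI_nonneg hp a b fun _ => ()
  rw [CMI, ent_marg_const h1,
    ent_marg_eq_of_injective (g := a) (Prod.mk_left_injective ()) fun _ _ => rfl,
    ent_marg_eq_of_injective (g := b) (Prod.mk_left_injective ()) fun _ _ => rfl,
    ent_marg_eq_of_injective (g := fun ω => (a ω, b ω)) (e := fun s => (s.1, s.2, ()))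
      (fun _ _ h => by simpa [Prod.ext_iff] using h) fun _ _ => rfl] at h
  rw [MI]
  linarith

theorem MI_pair_eq_MI_add_CMI (p : Ω → ℝ) (a : Ω → A) (b : Ω → B) (c : Ω → C) :
    MI p (fun ω => (a ω, c ω)) b = MI p c b + CMI p a b c := by
  have habc : ent (marg p fun ω => ((a ω, c ω), b ω)) = ent (marg p fun ω => (a ω, b ω, c ω)) :=
    ent_marg_eq_of_injective (e := fun s => ((s.1, s.2.2), s.2.1))
      (fun _ _ h => by simp only [Prod.ext_iff] at h ⊢; tauto) fun _ _ => rfl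
  have hbc : ent (marg p fun ω => (c ω, b ω)) = ent (marg p fun ω => (b ω, c ω)) :=
    ent_marg_eq_of_injective Prod.swap_injective fun _ _ => rfl
  rw [MI, MI, CMI, habc, hbc]
  ring

theorem CMI_le_MI_pair (hp : ∀ ω, 0 ≤ p ω) (h1 : ∑ ω, p ω = 1)
    (a : Ω → A) (b : Ω → B) (c : Ω → C) : CMI p a b c ≤ MI p (fun ω => (a ω, c ω)) b := by
  rw [MI_pair_eq_MI_add_CMI]
  linarith [MI_nonneg hp h1 c b]

theorem CMI_le_CMI_of_eq_comp (hp : ∀ ω, 0 ≤ p ω) {y : Ω → T} {b : Ω → B} {c : Ω → C}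
    (F : C → B → T) (hy : ∀ ω, p ω ≠ 0 → y ω = F (c ω) (b ω)) (a : Ω → A) :
    CMI p a y c ≤ CMI p a b c := by
  have h := CMI_nonneg hp a b fun ω => (y ω, c ω)
  have hbyc : ent (marg p fun ω => (b ω, y ω, c ω)) = ent (marg p fun ω => (b ω, c ω)) :=
    ent_marg_eq_of_injective (e := fun s => (s.1, F s.2 s.1, s.2))
      (fun _ _ h => by simp only [Prod.ext_iff] at h ⊢; tauto) fun ω hω => by rw [hy ω hω]
  have habyc : ent (marg p fun ω => (a ω, b ω, y ω, c ω))
      = ent (marg p fun ω => (a ω, b ω, c ω)) :=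
    ent_marg_eq_of_injective (e := fun s => (s.1, s.2.1, F s.2.2 s.2.1, s.2.2))
      (fun _ _ h => by simp only [Prod.ext_iff] at h ⊢; tauto) fun ω hω => by rw [hy ω hω]
  rw [CMI, hbyc, habyc] at h
  rw [CMI, CMI]
  linarith

theorem MI_eq_ent_add_sum_mul_log (hp : ∀ ω, 0 ≤ p ω) {g : Ω → S} {h : Ω → T}
    (R : S → T → ℝ) (hR : ∀ s t, marg p (fun ω => (g ω, h ω)) (s, t) = marg p g s * R s t) :
    MI p g h = ent (marg p h) + ∑ ω, p ω * log (R (g ω) (h ω)) := by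
  have hRpos : ∀ ω, p ω ≠ 0 → 0 < R (g ω) (h ω) := fun ω hω =>
    pos_of_mul_pos_right (hR _ _ ▸ marg_apply_pos hp (fun ω => (g ω, h ω)) hω)
      (marg_nonneg hp g _)
  rw [MI, ent_marg_eq p fun ω => (g ω, h ω), ent_marg_eq p g]
  simp only [hR]
  rw [sum_mul_log_mul (fun ω hω => marg_apply_pos hp g hω) hRpos]
  ring

end Inequalities

section Channel

variable {U X1 X2 V Y : Type*} [DecidableEq Y] {q : X1 × X2 → ℝ} {pu : X1 → U → ℝ}
  {pv : X2 → V → ℝ}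

noncomputable def channelJoint (q : X1 × X2 → ℝ) (pu : X1 → U → ℝ) (pv : X2 → V → ℝ)
    (f : U → V → Y) (ω : U × X1 × X2 × V × Y) : ℝ :=
  q (ω.2.1, ω.2.2.1) * pu ω.2.1 ω.1 * pv ω.2.2.1 ω.2.2.2.1 *
    if ω.2.2.2.2 = f ω.1 ω.2.2.2.1 then 1 else 0

lemma channelJoint_nonneg (hq : ∀ x, 0 ≤ q x) (hpu : ∀ x u, 0 ≤ pu x u)
    (hpv : ∀ x v, 0 ≤ pv x v) (f : U → V → Y) (ω : U × X1 × X2 × V × Y) :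
    0 ≤ channelJoint q pu pv f ω := by
  unfold channelJoint
  split_ifs <;> simp [mul_nonneg, *]

lemma eq_of_channelJoint_ne_zero {f : U → V → Y} {ω : U × X1 × X2 × V × Y}
    (h : channelJoint q pu pv f ω ≠ 0) : ω.2.2.2.2 = f ω.1 ω.2.2.2.1 := by
  by_contra hy
  exact h (by simp [channelJoint, hy])

variable [Fintype U] [Fintype X1] [Fintype X2] [Fintype V] [Fintype Y]

lemma sum_channelJoint (hq : ∑ x, q x = 1) (hpu : ∀ x, ∑ u, pu x u = 1)
    (hpv : ∀ x, ∑ v, pv x v = 1) (f : U → V → Y) : ∑ ω, channelJoint q pu pv f ω = 1 := by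
  simp only [channelJoint, mul_ite, mul_one, mul_zero, Fintype.sum_prod_type, sum_ite_eq',
    mem_univ, ↓reduceIte, ← mul_sum, hpv]
  rw [sum_comm]
  simp [← mul_sum, hpu, ← sum_mul, ← Fintype.sum_prod_type', hq]

lemma marg_channelJoint_inputs_state_output [DecidableEq U] [DecidableEq X1] [DecidableEq X2]
    [DecidableEq V] (hpv : ∀ x, ∑ v, pv x v = 1) (f : U → V → Y)
    (s : (X1 × X2) × U) (v : V) :
    marg (channelJoint q pu pv f) (fun ω => (((ω.2.1, ω.2.2.1), ω.1), ω.2.2.2.1)) (s, v)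
      = marg (channelJoint q pu pv f) (fun ω => ((ω.2.1, ω.2.2.1), ω.1)) s * pv s.1.2 v := by
  obtain ⟨⟨x1, x2⟩, u⟩ := s
  simp [marg, channelJoint, Fintype.sum_prod_type, ite_and, ← mul_sum, hpv]

lemma marg_channelJoint_input_output [DecidableEq X2] [DecidableEq V]
    (hpv : ∀ x, ∑ v, pv x v = 1) (f : U → V → Y) (x2 : X2) (v : V) :
    marg (channelJoint q pu pv f) (fun ω => (ω.2.2.1, ω.2.2.2.1)) (x2, v)
      = marg (channelJoint q pu pv f) (fun ω => ω.2.2.1) x2 * pv x2 v := by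
  simp [marg, channelJoint, Fintype.sum_prod_type, ite_and, ← sum_mul, ← mul_sum, hpv]

end Channel

/-- If p(u,v2|x1,x2)=p(u|x1)p(v2|x2) and Y=f(U,V2) deterministically,
then I(X1,X2;Y|U) ≤ I(X2;V2). -/
theorem stmt0 {U X1 X2 V2 Y : Type*}
    [Fintype U] [Fintype X1] [Fintype X2] [Fintype V2] [Fintype Y]
    [DecidableEq U] [DecidableEq X1] [DecidableEq X2] [DecidableEq V2] [DecidableEq Y]
    (q : X1 × X2 → ℝ) (hq0 : ∀ x, 0 ≤ q x) (hq1 : ∑ x, q x = 1)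
    (pu : X1 → U → ℝ) (hpu0 : ∀ x u, 0 ≤ pu x u) (hpu1 : ∀ x, ∑ u, pu x u = 1)
    (pv : X2 → V2 → ℝ) (hpv0 : ∀ x v, 0 ≤ pv x v) (hpv1 : ∀ x, ∑ v, pv x v = 1)
    (f : U → V2 → Y)
    (p : U × X1 × X2 × V2 × Y → ℝ)
    (hp : ∀ u x1 x2 v y, p (u, x1, x2, v, y) =
      q (x1, x2) * pu x1 u * pv x2 v * (if y = f u v then 1 else 0)) :
    CMI p (fun ω => (ω.2.1, ω.2.2.1)) (fun ω => ω.2.2.2.2) (fun ω => ω.1)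
      ≤ MI p (fun ω => ω.2.2.1) (fun ω => ω.2.2.2.1) := by
  obtain rfl : p = channelJoint q pu pv f := funext fun ⟨u, x1, x2, v, y⟩ => hp u x1 x2 v y
  have hp0 := channelJoint_nonneg hq0 hpu0 hpv0 f
  calc _
      ≤ CMI (channelJoint q pu pv f) (fun ω => (ω.2.1, ω.2.2.1)) (fun ω => ω.2.2.2.1)
          (fun ω => ω.1) :=
        CMI_le_CMI_of_eq_comp hp0 f (fun _ => eq_of_channelJoint_ne_zero) _
    _ ≤ MI (channelJoint q pu pv f) (fun ω => ((ω.2.1, ω.2.2.1), ω.1)) (fun ω => ω.2.2.2.1) :=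
        CMI_le_MI_pair hp0 (sum_channelJoint hq1 hpu1 hpv1 f) _ _ _
    _ = _ := by
        rw [MI_eq_ent_add_sum_mul_log hp0 (fun s v => pv s.1.2 v)
            (marg_channelJoint_inputs_state_output hpv1 f),
          MI_eq_ent_add_sum_mul_log hp0 pv (marg_channelJoint_input_output hpv1 f)]
end

section
/- For m ≥ 1, α ∈ [0,1], and γ_1,...,γ_m > 0, if μ > 0 satisfies (1/2)·Σ_{i=1}^m (√(γ_i(γ_i+4μ)) − γ_i) = 1−α, then μ ≤ (1−α)/m + ((1−α)²/m²)·(1/min_i γ_i), with equality if and only if γ_1 = ... = γ_m. -/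
/-!
Put `s i = (√(γ i (γ i + 4μ)) - γ i) / 2`, the positive root of `t² + γ i t = γ i μ`, so that
`μ = s i + s i² / γ i` for every `i` and `∑ i, s i = 1 - α`. For fixed `μ > 0` the root is
strictly increasing in `γ`, so the smallest `s i` sits at the smallest `γ i` and is at most the
average `(1 - α) / m`. As `t ↦ t + t² / γ` is strictly increasing on `t ≥ 0`, evaluating it at
the smallest `γ i` gives the bound, with equality iff every `s i` equals the average, i.e. iff all
`γ i` coincide.
-/

open Finset Set

noncomputable section

def posRoot (γ μ : ℝ) : ℝ := (√(γ * (γ + 4 * μ)) - γ) / 2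

variable {γ μ : ℝ}

lemma posRoot_pos (hγ : 0 < γ) (hμ : 0 < μ) : 0 < posRoot γ μ := by
  have : γ < √(γ * (γ + 4 * μ)) := Real.lt_sqrt_of_sq_lt (by nlinarith)
  unfold posRoot
  linarith

lemma posRoot_sq_add_mul (hγ : 0 ≤ γ) (hμ : 0 ≤ μ) :
    posRoot γ μ ^ 2 + γ * posRoot γ μ = γ * μ := by
  have h := Real.sq_sqrt (by positivity : 0 ≤ γ * (γ + 4 * μ))
  unfold posRoot
  linear_combination h / 4

lemma eq_posRoot_add_sq_div (hγ : 0 < γ) (hμ : 0 ≤ μ) :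
    μ = posRoot γ μ + posRoot γ μ ^ 2 / γ := by
  field_simp
  linear_combination -posRoot_sq_add_mul hγ.le hμ

lemma add_sq_div_strictMonoOn (hγ : 0 ≤ γ) : StrictMonoOn (fun t ↦ t + t ^ 2 / γ) (Ici 0) := by
  intro a ha b _ hab
  have := div_le_div_of_nonneg_right (pow_le_pow_left₀ ha hab.le 2) hγ
  simp only
  linarith

/-- If `γ < γ'` but `posRoot γ' μ ≤ posRoot γ μ`, then computing `μ` from both roots gives
`μ = s + s² / γ ≥ s' + s'² / γ > s' + s'² / γ' = μ`. -/
lemma posRoot_strictMonoOn (hμ : 0 < μ) : StrictMonoOn (posRoot · μ) (Ioi 0) := by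
  intro γ hγ γ' hγ' hlt
  by_contra! hle
  have hs' := posRoot_pos hγ' hμ
  have hsq : posRoot γ' μ ^ 2 / γ ≤ posRoot γ μ ^ 2 / γ :=
    div_le_div_of_nonneg_right (pow_le_pow_left₀ hs'.le hle 2) (le_of_lt hγ)
  have hγγ' : posRoot γ' μ ^ 2 / γ' < posRoot γ' μ ^ 2 / γ :=
    div_lt_div_of_pos_left (by positivity) hγ hlt
  have h := eq_posRoot_add_sq_div hγ hμ.le
  have h' := eq_posRoot_add_sq_div (mem_Ioi.mp hγ') hμ.le
  linarith

section Average

variable {ι : Type*} [Fintype ι] [Nonempty ι] {s : ι → ℝ} {a : ℝ}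

lemma le_sum_div_card_of_forall_le (h : ∀ i, a ≤ s i) : a ≤ (∑ i, s i) / Fintype.card ι := by
  rw [le_div_iff₀' (by positivity)]
  simpa using Finset.card_nsmul_le_sum univ s a fun i _ ↦ h i

lemma eq_sum_div_card_iff_of_forall_le (h : ∀ i, a ≤ s i) :
    a = (∑ i, s i) / Fintype.card ι ↔ ∀ i, s i = a := by
  rw [eq_div_iff (by positivity), mul_comm, ← Finset.card_univ, ← nsmul_eq_mul,
    ← Finset.sum_const, Finset.sum_eq_sum_iff_of_le fun i _ ↦ h i]
  simp [eq_comm]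

end Average

theorem stmt3_general (m : ℕ) (hm : 1 ≤ m) (α : ℝ)
    (γ : Fin m → ℝ) (hγ : ∀ i, 0 < γ i) (μ : ℝ) (hμ : 0 < μ)
    (heq : (1/2) * ∑ i, (Real.sqrt (γ i * (γ i + 4*μ)) - γ i) = 1 - α) :
    μ ≤ (1-α)/m + ((1-α)^2/(m:ℝ)^2) * (1 / ⨅ i, γ i)
    ∧ (μ = (1-α)/m + ((1-α)^2/(m:ℝ)^2) * (1 / ⨅ i, γ i) ↔ ∀ i j, γ i = γ j) := by
  have : Nonempty (Fin m) := ⟨⟨0, hm⟩⟩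
  obtain ⟨i₀, hi₀⟩ := exists_eq_ciInf_of_finite (f := γ)
  have hmin i : γ i₀ ≤ γ i := hi₀ ▸ ciInf_le (Finite.bddBelow_range γ) i
  set s := fun i ↦ posRoot (γ i) μ
  set c := (1 - α) / m
  have hmono := posRoot_strictMonoOn hμ
  have hsum : ∑ i, s i = 1 - α := by
    rw [← heq, Finset.mul_sum]; simp only [s, posRoot]; congr! 1; ring
  have hRHS : (1-α)/m + ((1-α)^2/(m:ℝ)^2) * (1 / ⨅ i, γ i) = c + c ^ 2 / γ i₀ := by
    rw [← hi₀]; ring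
  have hμs : μ = s i₀ + s i₀ ^ 2 / γ i₀ := eq_posRoot_add_sq_div (hγ i₀) hμ.le
  have hmin_s i : s i₀ ≤ s i := hmono.monotoneOn (hγ i₀) (hγ i) (hmin i)
  have havg : (∑ i, s i) / Fintype.card (Fin m) = c := by rw [hsum, Fintype.card_fin]
  have hs₀ : 0 ≤ s i₀ := (posRoot_pos (hγ i₀) hμ).le
  have hsc : s i₀ ≤ c := havg ▸ le_sum_div_card_of_forall_le hmin_s
  have hc : 0 ≤ c := hs₀.trans hsc
  have hf := add_sq_div_strictMonoOn (hγ i₀).le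
  rw [hRHS, hμs]
  refine ⟨(hf.le_iff_le hs₀ hc).mpr hsc, ?_⟩
  rw [hf.eq_iff_eq hs₀ hc, ← havg, eq_sum_div_card_iff_of_forall_le hmin_s]
  simp only [s, hmono.eq_iff_eq (hγ _) (hγ i₀)]
  exact ⟨fun h i j ↦ (h i).trans (h j).symm, fun h i ↦ h i i₀⟩

/-- upper bound on the Lagrange multiplier μ. -/
theorem stmt3 (m : ℕ) (hm : 1 ≤ m) (α : ℝ) (hα : α ∈ Set.Icc (0:ℝ) 1)
    (γ : Fin m → ℝ) (hγ : ∀ i, 0 < γ i) (μ : ℝ) (hμ : 0 < μ)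
    (heq : (1/2) * ∑ i, (Real.sqrt (γ i * (γ i + 4*μ)) - γ i) = 1 - α) :
    μ ≤ (1-α)/m + ((1-α)^2/(m:ℝ)^2) * (1 / ⨅ i, γ i)
    ∧ (μ = (1-α)/m + ((1-α)^2/(m:ℝ)^2) * (1 / ⨅ i, γ i) ↔ ∀ i j, γ i = γ j) :=
  stmt3_general m hm α γ hγ μ hμ heq
end
end

section
/- For m ≥ 1, α ∈ [0,1], and γ_1,...,γ_m > 0, if μ > 0 satisfies (1/2)·Σ_{i=1}^m (√(γ_i(γ_i+4μ)) − γ_i) = 1−α, then μ ≥ (1−α)/m + ((1−α)²/m)·(1/Σ_i γ_i), with equality if and only if γ_1 = ... = γ_m. -/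
/-!
With `a i = √γᵢ` and `b i = √(γᵢ + 4μ)`, the constraint says `∑ aᵢ bᵢ = ∑ γᵢ + 2(1 - α)`, while
`∑ aᵢ² = ∑ γᵢ` and `∑ bᵢ² = ∑ γᵢ + 4mμ`. Hence `μ` minus the claimed bound is exactly the
Cauchy–Schwarz defect `∑ aᵢ² ∑ bᵢ² - (∑ aᵢ bᵢ)²` divided by `4m ∑ γᵢ`. By Lagrange's identity the
defect vanishes iff `aᵢ bⱼ = aⱼ bᵢ` for all `i, j`, i.e. `γᵢ (γⱼ + 4μ) = γⱼ (γᵢ + 4μ)`, i.e.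
`γᵢ = γⱼ`.
-/

open Finset

namespace Finset

variable {ι R : Type*}

theorem two_mul_sum_sq_mul_sum_sq_sub_sq_sum_mul [CommRing R] (s : Finset ι) (f g : ι → R) :
    2 * ((∑ i ∈ s, f i ^ 2) * (∑ i ∈ s, g i ^ 2) - (∑ i ∈ s, f i * g i) ^ 2) =
      ∑ i ∈ s, ∑ j ∈ s, (f i * g j - f j * g i) ^ 2 := by
  have h : ∀ i j, (f i * g j - f j * g i) ^ 2 =
      f i ^ 2 * g j ^ 2 + g i ^ 2 * f j ^ 2 - 2 * (f i * g i) * (f j * g j) := fun i j => by ring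
  simp only [h, sum_sub_distrib, sum_add_distrib, ← mul_sum, ← sum_mul]
  ring

theorem sq_sum_mul_eq_sum_sq_mul_sum_sq_iff [CommRing R] [LinearOrder R] [IsStrictOrderedRing R]
    (s : Finset ι) (f g : ι → R) :
    (∑ i ∈ s, f i * g i) ^ 2 = (∑ i ∈ s, f i ^ 2) * (∑ i ∈ s, g i ^ 2) ↔
      ∀ i ∈ s, ∀ j ∈ s, f i * g j = f j * g i := by
  rw [eq_comm, ← sub_eq_zero, ← mul_right_inj' (two_ne_zero (α := R)), mul_zero,
    two_mul_sum_sq_mul_sum_sq_sub_sq_sum_mul,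
    sum_eq_zero_iff_of_nonneg fun i _ => sum_nonneg fun j _ => sq_nonneg _]
  refine forall₂_congr fun i _ => ?_
  rw [sum_eq_zero_iff_of_nonneg fun j _ => sq_nonneg _]
  simp only [sq_eq_zero_iff, sub_eq_zero]

end Finset

theorem Real.sqrt_mul_sqrt_add_eq_iff {x y c : ℝ} (hx : 0 ≤ x) (hy : 0 ≤ y) (hc : 0 < c) :
    √x * √(y + c) = √y * √(x + c) ↔ x = y := by
  rw [← Real.sqrt_mul hx, ← Real.sqrt_mul hy, Real.sqrt_inj (by positivity) (by positivity)]
  constructor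
  · intro h
    exact mul_left_cancel₀ hc.ne' (by linear_combination h)
  · rintro rfl
    rfl

theorem stmt4_general (m : ℕ) (hm : 1 ≤ m) (α : ℝ)
    (γ : Fin m → ℝ) (hγ : ∀ i, 0 < γ i) (μ : ℝ) (hμ : 0 < μ)
    (heq : (1/2) * ∑ i, (Real.sqrt (γ i * (γ i + 4*μ)) - γ i) = 1 - α) :
    μ ≥ (1-α)/m + ((1-α)^2/(m:ℝ)) * (1 / ∑ i, γ i)
    ∧ (μ = (1-α)/m + ((1-α)^2/(m:ℝ)) * (1 / ∑ i, γ i) ↔ ∀ i j, γ i = γ j) := by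
  set S := ∑ i, γ i
  have hS : 0 < S := sum_pos (fun i _ => hγ i) (univ_nonempty_iff.2 ⟨⟨0, hm⟩⟩)
  set a : Fin m → ℝ := fun i => √(γ i)
  set b : Fin m → ℝ := fun i => √(γ i + 4 * μ)
  have hab : ∑ i, a i * b i = S + 2 * (1 - α) := by
    simp only [a, b, ← Real.sqrt_mul (hγ _).le]
    rw [sum_sub_distrib] at heq
    linarith
  have ha : ∑ i, a i ^ 2 = S := sum_congr rfl fun i _ => Real.sq_sqrt (hγ i).le
  have hb : ∑ i, b i ^ 2 = S + 4 * m * μ := by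
    rw [sum_congr rfl fun i _ => Real.sq_sqrt (by linarith [hγ i] : 0 ≤ γ i + 4 * μ)]
    simp [S, sum_add_distrib]
    ring
  have hgap : μ - ((1 - α) / m + (1 - α) ^ 2 / m * (1 / S)) =
      ((∑ i, a i ^ 2) * (∑ i, b i ^ 2) - (∑ i, a i * b i) ^ 2) / (4 * m * S) := by
    rw [hab, ha, hb]
    field_simp
    ring
  constructor
  · rw [ge_iff_le, ← sub_nonneg, hgap]
    exact div_nonneg (sub_nonneg.2 (sum_mul_sq_le_sq_mul_sq univ a b)) (by positivity)
  · rw [← sub_eq_zero, hgap, div_eq_zero_iff, or_iff_left (by positivity), sub_eq_zero, eq_comm,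
      sq_sum_mul_eq_sum_sq_mul_sum_sq_iff]
    simp [a, b, Real.sqrt_mul_sqrt_add_eq_iff (hγ _).le (hγ _).le (by positivity : 0 < 4 * μ)]

/-- lower bound on the Lagrange multiplier μ. -/
theorem stmt4 (m : ℕ) (hm : 1 ≤ m) (α : ℝ) (hα : α ∈ Set.Icc (0:ℝ) 1)
    (γ : Fin m → ℝ) (hγ : ∀ i, 0 < γ i) (μ : ℝ) (hμ : 0 < μ)
    (heq : (1/2) * ∑ i, (Real.sqrt (γ i * (γ i + 4*μ)) - γ i) = 1 - α) :
    μ ≥ (1-α)/m + ((1-α)^2/(m:ℝ)) * (1 / ∑ i, γ i)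
    ∧ (μ = (1-α)/m + ((1-α)^2/(m:ℝ)) * (1 / ∑ i, γ i) ↔ ∀ i j, γ i = γ j) :=
  stmt4_general m hm α γ hγ μ hμ heq
end

section
/- For γ_1,...,γ_m > 0 and α_1,...,α_m > 0 with Σ_i α_i ≤ 1, it holds that Σ_{i=1}^m (1/2)·log(1 + γ_i/α_i) > (1/2)·log(1 + (Σ_{i=1}^m √γ_i)²) whenever m ≥ 2. -/
/-!
By Cauchy–Schwarz (in Sedrakyan's form) and `∑ αᵢ ≤ 1`, `(∑ √γᵢ)² ≤ ∑ γᵢ / αᵢ`. On the other hand,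
expanding `∏ (1 + xᵢ)` gives `1 + ∑ xᵢ` plus the mixed products, which are positive as soon as two of
the `xᵢ > 0` exist; taking logarithms, `log (1 + ∑ xᵢ) < ∑ log (1 + xᵢ)` for `m ≥ 2`.
-/

open Finset

namespace Finset

variable {ι : Type*} (s : Finset ι) {x : ι → ℝ}

theorem one_add_sum_le_prod_one_add (hx : ∀ i ∈ s, 0 ≤ x i) :
    1 + ∑ i ∈ s, x i ≤ ∏ i ∈ s, (1 + x i) := by
  classical
  induction s using Finset.induction_on with
  | empty => simp
  | insert j s hj ih =>
    rw [sum_insert hj, prod_insert hj]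
    have hxj : 0 ≤ x j := hx j (mem_insert_self _ _)
    have hsum : 0 ≤ ∑ i ∈ s, x i := sum_nonneg fun i hi ↦ hx i (mem_insert_of_mem hi)
    calc 1 + (x j + ∑ i ∈ s, x i) ≤ (1 + x j) * (1 + ∑ i ∈ s, x i) := by nlinarith
      _ ≤ (1 + x j) * ∏ i ∈ s, (1 + x i) := by
        gcongr
        exact ih fun i hi ↦ hx i (mem_insert_of_mem hi)

theorem one_add_sum_lt_prod_one_add (hx : ∀ i ∈ s, 0 < x i) (hs : 1 < #s) :
    1 + ∑ i ∈ s, x i < ∏ i ∈ s, (1 + x i) := by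
  classical
  obtain ⟨i, hi, j, hj, hij⟩ := one_lt_card.1 hs
  have hrest : 0 < ∑ k ∈ s.erase i, x k :=
    sum_pos (fun k hk ↦ hx k (mem_of_mem_erase hk)) ⟨j, mem_erase.2 ⟨Ne.symm hij, hj⟩⟩
  have hprod := one_add_sum_le_prod_one_add (s.erase i) fun k hk ↦ (hx k (mem_of_mem_erase hk)).le
  have hxi := hx i hi
  rw [← add_sum_erase s x hi, ← mul_prod_erase s (fun k ↦ 1 + x k) hi]
  calc 1 + (x i + ∑ k ∈ s.erase i, x k) < (1 + x i) * (1 + ∑ k ∈ s.erase i, x k) := by nlinarith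
    _ ≤ (1 + x i) * ∏ k ∈ s.erase i, (1 + x k) := by gcongr

theorem log_one_add_sum_lt_sum_log_one_add (hx : ∀ i ∈ s, 0 < x i) (hs : 1 < #s) :
    Real.log (1 + ∑ i ∈ s, x i) < ∑ i ∈ s, Real.log (1 + x i) := by
  have hsum : 0 ≤ ∑ i ∈ s, x i := sum_nonneg fun i hi ↦ (hx i hi).le
  rw [← Real.log_prod fun i hi ↦ (by linarith [hx i hi] : 1 + x i ≠ 0)]
  exact Real.log_lt_log (by linarith) (one_add_sum_lt_prod_one_add s hx hs)

theorem sq_sum_sqrt_le_sum_div {γ a : ι → ℝ} (hγ : ∀ i ∈ s, 0 ≤ γ i) (ha : ∀ i ∈ s, 0 < a i)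
    (has : ∑ i ∈ s, a i ≤ 1) :
    (∑ i ∈ s, √(γ i)) ^ 2 ≤ ∑ i ∈ s, γ i / a i := by
  obtain rfl | hne := s.eq_empty_or_nonempty
  · simp
  have hapos : 0 < ∑ i ∈ s, a i := sum_pos ha hne
  calc (∑ i ∈ s, √(γ i)) ^ 2 ≤ (∑ i ∈ s, √(γ i)) ^ 2 / ∑ i ∈ s, a i :=
        le_div_self (sq_nonneg _) hapos has
    _ ≤ ∑ i ∈ s, √(γ i) ^ 2 / a i := sq_sum_div_le_sum_sq_div s _ ha
    _ = ∑ i ∈ s, γ i / a i := sum_congr rfl fun i hi ↦ by rw [Real.sq_sqrt (hγ i hi)]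

end Finset

/-- for m ≥ 2, Σ (1/2)log(1+γ_i/α_i) > (1/2)log(1+(Σ√γ_i)²)
whenever α_i > 0 and Σα_i ≤ 1. -/
theorem stmt6 (m : ℕ) (hm : 2 ≤ m) (γ : Fin m → ℝ) (hγ : ∀ i, 0 < γ i)
    (a : Fin m → ℝ) (ha : ∀ i, 0 < a i) (hs : ∑ i, a i ≤ 1) :
    (1/2) * Real.log (1 + (∑ i, Real.sqrt (γ i))^2)
      < ∑ i, (1/2) * Real.log (1 + γ i / a i) := by
  have hratio : ∀ i ∈ univ, 0 < γ i / a i := fun i _ ↦ div_pos (hγ i) (ha i)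
  have hcard : 1 < #(univ : Finset (Fin m)) := by rw [card_univ, Fintype.card_fin]; omega
  rw [← mul_sum]
  calc (1/2) * Real.log (1 + (∑ i, √(γ i)) ^ 2)
      ≤ (1/2) * Real.log (1 + ∑ i, γ i / a i) := by
        gcongr
        exact sq_sum_sqrt_le_sum_div univ (fun i _ ↦ (hγ i).le) (fun i _ ↦ ha i) hs
    _ < (1/2) * ∑ i, Real.log (1 + γ i / a i) := by
        gcongr
        exact log_one_add_sum_lt_sum_log_one_add univ hratio hcard
end

section
/- Consider minimizing Σ_{i=1}^m log(1 + γ_i/α_i) over α_1,...,α_m > 0 subject to Σ_i α_i = 1−α, where α ∈ [0,1) and γ_i > 0. The minimizer is α_i* = (√(γ_i(γ_i+4μ)) − γ_i)/2 where μ > 0 is the unique solution of (1/2)·Σ_i (√(γ_i(γ_i+4μ)) − γ_i) = 1−α. -/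
/-!
`x ↦ log (1 + γ / x)` is convex on `(0, ∞)` with derivative `-γ / (x (x + γ))`. The share
`y = (√(γ (γ + 4μ)) - γ) / 2` is the positive root of `y (y + γ) = γ μ`, so at the proposed
minimiser every summand has the same slope `-1/μ`. Summing the tangent-line inequalities, the
linear terms cancel because both allocations have the same total.
-/

open Finset Real

lemma log_one_add_div_tangent_le {γ x y : ℝ} (hγ : 0 ≤ γ) (hx : 0 < x) (hy : 0 < y) :
    log (1 + γ / y) - γ * (x - y) / (y * (y + γ)) ≤ log (1 + γ / x) := by
  have hA : 0 < (y + γ) / y := by positivity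
  have hB : 0 < (x + γ) / x := by positivity
  have hlog : log ((y + γ) / y) - log ((x + γ) / x) ≤ γ * (x - y) / (y * (x + γ)) := by
    calc log ((y + γ) / y) - log ((x + γ) / x)
        = log (((y + γ) / y) / ((x + γ) / x)) := (log_div hA.ne' hB.ne').symm
      _ ≤ ((y + γ) / y) / ((x + γ) / x) - 1 := log_le_sub_one_of_pos (by positivity)
      _ = γ * (x - y) / (y * (x + γ)) := by field_simp; ring
  have hslope : γ * (x - y) / (y * (x + γ)) ≤ γ * (x - y) / (y * (y + γ)) := by
    rw [div_le_div_iff₀ (by positivity) (by positivity)]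
    nlinarith [mul_nonneg (mul_nonneg hγ hy.le) (sq_nonneg (x - y))]
  rw [one_add_div hx.ne', one_add_div hy.ne']
  linarith

lemma sum_log_one_add_div_le_of_mul_add_eq {ι : Type*} (s : Finset ι) {γ a y : ι → ℝ} {μ : ℝ}
    (hγ : ∀ i ∈ s, 0 < γ i) (ha : ∀ i ∈ s, 0 < a i) (hy : ∀ i ∈ s, 0 < y i)
    (hμ : ∀ i ∈ s, y i * (y i + γ i) = γ i * μ) (hsum : ∑ i ∈ s, a i = ∑ i ∈ s, y i) :
    ∑ i ∈ s, log (1 + γ i / y i) ≤ ∑ i ∈ s, log (1 + γ i / a i) := by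
  have htangent : ∀ i ∈ s,
      log (1 + γ i / y i) - (a i - y i) * (γ i / (y i * (y i + γ i))) ≤ log (1 + γ i / a i) := by
    intro i hi
    rw [mul_div, mul_comm (a i - y i)]
    exact log_one_add_div_tangent_le (hγ i hi).le (ha i hi) (hy i hi)
  have hslope : ∀ i ∈ s, γ i / (y i * (y i + γ i)) = μ⁻¹ := by
    intro i hi
    have hμ0 : μ ≠ 0 := by
      rintro rfl
      nlinarith [hμ i hi, hy i hi, hγ i hi]
    rw [hμ i hi]
    field_simp [(hγ i hi).ne']
  have hcancel : ∑ i ∈ s, (a i - y i) * (γ i / (y i * (y i + γ i))) = 0 := by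
    rw [sum_congr rfl fun i hi => by rw [hslope i hi], ← sum_mul, sum_sub_distrib, hsum,
      sub_self, zero_mul]
  simpa only [sum_sub_distrib, hcancel, sub_zero] using sum_le_sum htangent

lemma sqrt_mul_add_four_mul_sub_pos {γ μ : ℝ} (hγ : 0 < γ) (hμ : 0 < μ) :
    0 < (√(γ * (γ + 4 * μ)) - γ) / 2 := by
  have : γ < √(γ * (γ + 4 * μ)) := by
    rw [lt_sqrt hγ.le]
    nlinarith
  linarith

lemma sqrt_mul_add_four_mul_sub_root {γ μ : ℝ} (h : 0 ≤ γ * (γ + 4 * μ)) :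
    let y := (√(γ * (γ + 4 * μ)) - γ) / 2
    y * (y + γ) = γ * μ := by
  nlinarith [sq_sqrt h]

theorem stmt14_general (m : ℕ) (α : ℝ)
    (γ : Fin m → ℝ) (hγ : ∀ i, 0 < γ i) (μ : ℝ) (hμ : 0 < μ)
    (heq : (1/2) * ∑ i, (Real.sqrt (γ i * (γ i + 4*μ)) - γ i) = 1 - α) :
    (∀ i, 0 < (Real.sqrt (γ i * (γ i + 4*μ)) - γ i) / 2)
    ∧ (∑ i, (Real.sqrt (γ i * (γ i + 4*μ)) - γ i) / 2 = 1 - α)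
    ∧ (∀ a : Fin m → ℝ, (∀ i, 0 < a i) → ∑ i, a i = 1 - α →
        ∑ i, Real.log (1 + γ i / ((Real.sqrt (γ i * (γ i + 4*μ)) - γ i) / 2))
          ≤ ∑ i, Real.log (1 + γ i / a i)) := by
  have hpos i := sqrt_mul_add_four_mul_sub_pos (hγ i) hμ
  have hsum : ∑ i, (√(γ i * (γ i + 4 * μ)) - γ i) / 2 = 1 - α := by
    rw [← sum_div, ← heq]
    ring
  refine ⟨hpos, hsum, fun a ha hasum => ?_⟩
  refine sum_log_one_add_div_le_of_mul_add_eq univ (fun i _ => hγ i) (fun i _ => ha i)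
    (fun i _ => hpos i) (fun i _ => sqrt_mul_add_four_mul_sub_root ?_) (hasum.trans hsum.symm)
  exact mul_nonneg (hγ i).le (by linarith [hγ i])

/-- optimal noise partitioning for the Gaussian MAC upper bounding model. -/
theorem stmt14 (m : ℕ) (hm : 1 ≤ m) (α : ℝ) (hα0 : 0 ≤ α) (hα1 : α < 1)
    (γ : Fin m → ℝ) (hγ : ∀ i, 0 < γ i) (μ : ℝ) (hμ : 0 < μ)
    (heq : (1/2) * ∑ i, (Real.sqrt (γ i * (γ i + 4*μ)) - γ i) = 1 - α) :
    (∀ i, 0 < (Real.sqrt (γ i * (γ i + 4*μ)) - γ i) / 2)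
    ∧ (∑ i, (Real.sqrt (γ i * (γ i + 4*μ)) - γ i) / 2 = 1 - α)
    ∧ (∀ a : Fin m → ℝ, (∀ i, 0 < a i) → ∑ i, a i = 1 - α →
        ∑ i, Real.log (1 + γ i / ((Real.sqrt (γ i * (γ i + 4*μ)) - γ i) / 2))
          ≤ ∑ i, Real.log (1 + γ i / a i)) :=
  stmt14_general m α γ hγ μ hμ heq
end
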